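/- In a discounted MDP, if the improvement set T^π of a policy π is empty, then π is optimal: for every policy π' and every state s, v^{π'}(s) ≤ v^π(s). -/

import Mathlib

/-- The transition matrix induced by a policy. -/
noncomputable def polMatrix {n k : ℕ} (P : Fin n → Fin k → Fin n → ℝ)
    (π : Fin n → Fin k) : Matrix (Fin n) (Fin n) ℝ :=
  Matrix.of fun s s' => P s (π s) s'

/-- The reward vector induced by a policy. -/
noncomputable def polReward {n k : ℕ} (r : Fin n → Fin k → ℝ)
    (π : Fin n → Fin k) : Fin n → ℝ :=
  fun s => r s (π s)

/-- The value vector of a policy: `v^π = ∑_{i=0}^∞ γ^i (P^π)^i r^π`. -/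
noncomputable def polValue {n k : ℕ} (P : Fin n → Fin k → Fin n → ℝ)
    (r : Fin n → Fin k → ℝ) (γ : ℝ) (π : Fin n → Fin k) : Fin n → ℝ :=
  ∑' i : ℕ, γ ^ i • (polMatrix P π ^ i).mulVec (polReward r π)

/-- `π ⪯ π'` : the policy `π'` dominates `π`. -/
def Dominates {n k : ℕ} (P : Fin n → Fin k → Fin n → ℝ) (r : Fin n → Fin k → ℝ)
    (γ : ℝ) (π π' : Fin n → Fin k) : Prop :=
  ∀ s, polValue P r γ π s ≤ polValue P r γ π' s

/-- `π ≺ π'` : the policy `π'` strictly dominates `π`. -/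
def StrictDominates {n k : ℕ} (P : Fin n → Fin k → Fin n → ℝ) (r : Fin n → Fin k → ℝ)
    (γ : ℝ) (π π' : Fin n → Fin k) : Prop :=
  Dominates P r γ π π' ∧ ∃ s, polValue P r γ π s < polValue P r γ π' s

/-- A set of state-action pairs is well-defined if it contains each state at most once. -/
def WellDefined {n k : ℕ} (U : Set (Fin n × Fin k)) : Prop :=
  ∀ s a a', (s, a) ∈ U → (s, a') ∈ U → a = a'

-- `π ⊕ U` : the policy obtained from `π` by switching the action at `s` to `a`
-- for each `(s, a) ∈ U` (intended for well-defined `U`).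
open Classical in
noncomputable def switch {n k : ℕ} (π : Fin n → Fin k) (U : Set (Fin n × Fin k)) :
    Fin n → Fin k :=
  fun s => if h : ∃ a, (s, a) ∈ U then h.choose else π s

/-- The improvement set `T^π = {(s,a) : π ⊕ {(s,a)} ≻ π}`. -/
def improvementSet {n k : ℕ} (P : Fin n → Fin k → Fin n → ℝ) (r : Fin n → Fin k → ℝ)
    (γ : ℝ) (π : Fin n → Fin k) : Set (Fin n × Fin k) :=
  {p | StrictDominates P r γ π (Function.update π p.1 p.2)}

/-- The set of improvement states `S^π`. -/
def improvementStates {n k : ℕ} (P : Fin n → Fin k → Fin n → ℝ) (r : Fin n → Fin k → ℝ)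
    (γ : ℝ) (π : Fin n → Fin k) : Set (Fin n) :=
  {s | ∃ a, (s, a) ∈ improvementSet P r γ π}

/-!
If no single switch improves `π`, then `v^π` is a supersolution of every Bellman equation:
`r s a + γ ∑ s', P s a s' v^π s' ≤ v^π s` for all `(s, a)`. Otherwise switching `s` to `a` gives a
policy `σ` with `v^π ≤ T^σ v^π`, and comparison for `T^σ` makes `σ` strictly better than `π`.
Comparison itself (`T w ≤ w → v ≤ w` and `w ≤ T w → T w ≤ v`) is a discrete maximum principle:
for a stochastic matrix `M` and `0 ≤ γ < 1`, `γ • M *ᵥ e ≤ e` forces `0 ≤ e`.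
-/

open Matrix

namespace Matrix

variable {ι : Type*} [Fintype ι] [DecidableEq ι] {M : Matrix ι ι ℝ} {γ : ℝ}

theorem le_mulVec_of_mem_rowStochastic (hM : M ∈ rowStochastic ℝ ι) {x : ι → ℝ} {c : ℝ}
    (hx : ∀ j, c ≤ x j) (i : ι) : c ≤ (M *ᵥ x) i :=
  calc c = ∑ j, M i j * c := by rw [← Finset.sum_mul, sum_row_of_mem_rowStochastic hM i, one_mul]
    _ ≤ ∑ j, M i j * x j :=
      Finset.sum_le_sum fun j _ => mul_le_mul_of_nonneg_left (hx j) (nonneg_of_mem_rowStochastic hM)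
    _ = (M *ᵥ x) i := rfl

theorem norm_mulVec_le_of_mem_rowStochastic (hM : M ∈ rowStochastic ℝ ι) (x : ι → ℝ) :
    ‖M *ᵥ x‖ ≤ ‖x‖ := by
  have hx : ∀ j, -‖x‖ ≤ x j ∧ x j ≤ ‖x‖ := fun j => abs_le.1 (norm_le_pi_norm x j)
  refine (pi_norm_le_iff_of_nonneg (norm_nonneg x)).2 fun i => abs_le.2 ⟨?_, ?_⟩
  · exact le_mulVec_of_mem_rowStochastic hM (fun j => (hx j).1) i
  · have := le_mulVec_of_mem_rowStochastic hM (x := -x) (fun j => neg_le_neg (hx j).2) i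
    rwa [mulVec_neg, Pi.neg_apply, neg_le_neg_iff] at this

theorem summable_smul_pow_mulVec (hM : M ∈ rowStochastic ℝ ι) (hγ0 : 0 ≤ γ) (hγ1 : γ < 1)
    (x : ι → ℝ) : Summable fun i : ℕ => γ ^ i • (M ^ i) *ᵥ x := by
  refine Summable.of_norm_bounded ((summable_geometric_of_lt_one hγ0 hγ1).mul_right ‖x‖) fun i => ?_
  rw [norm_smul, Real.norm_of_nonneg (pow_nonneg hγ0 i)]
  exact mul_le_mul_of_nonneg_left
    (norm_mulVec_le_of_mem_rowStochastic (pow_mem hM i) x) (pow_nonneg hγ0 i)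

theorem tsum_smul_pow_mulVec_eq (hM : M ∈ rowStochastic ℝ ι) (hγ0 : 0 ≤ γ) (hγ1 : γ < 1)
    (x : ι → ℝ) :
    ∑' i : ℕ, γ ^ i • (M ^ i) *ᵥ x = x + γ • M *ᵥ ∑' i : ℕ, γ ^ i • (M ^ i) *ᵥ x := by
  have hs := summable_smul_pow_mulVec hM hγ0 hγ1 x
  let L : (ι → ℝ) →L[ℝ] ι → ℝ := LinearMap.toContinuousLinearMap (γ • mulVecLin M)
  have hshift (i : ℕ) : γ ^ (i + 1) • (M ^ (i + 1)) *ᵥ x = L (γ ^ i • (M ^ i) *ᵥ x) := by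
    simp [L, pow_succ', ← mulVec_mulVec, smul_smul, mul_comm]
  conv_lhs => rw [hs.tsum_eq_zero_add, funext hshift, ← L.map_tsum hs]
  simp [L]

/-- A discrete maximum principle: at a minimum `s` of `e`, averaging by `M` cannot go below
`e s`, so `e s ≤ γ • e s`. -/
theorem nonneg_of_smul_mulVec_le (hM : M ∈ rowStochastic ℝ ι) (hγ0 : 0 ≤ γ) (hγ1 : γ < 1)
    {e : ι → ℝ} (he : γ • M *ᵥ e ≤ e) : 0 ≤ e := by
  intro t
  have : Nonempty ι := ⟨t⟩
  obtain ⟨s, hs⟩ := Finite.exists_min e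
  have hMe : e s ≤ (M *ᵥ e) s := le_mulVec_of_mem_rowStochastic hM hs s
  have hes : γ * (M *ᵥ e) s ≤ e s := he s
  have hmin : 0 ≤ e s := by nlinarith
  exact hmin.trans (hs t)

end Matrix

section MDP

variable {n k : ℕ} {P : Fin n → Fin k → Fin n → ℝ} {r : Fin n → Fin k → ℝ} {γ : ℝ}

noncomputable def bellmanOp (P : Fin n → Fin k → Fin n → ℝ) (r : Fin n → Fin k → ℝ) (γ : ℝ)
    (π : Fin n → Fin k) (w : Fin n → ℝ) : Fin n → ℝ :=
  polReward r π + γ • polMatrix P π *ᵥ w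

theorem bellmanOp_apply (π : Fin n → Fin k) (w : Fin n → ℝ) (s : Fin n) :
    bellmanOp P r γ π w s = r s (π s) + γ * ∑ s', P s (π s) s' * w s' :=
  rfl

theorem bellmanOp_apply_congr {π π' : Fin n → Fin k} {s : Fin n} (h : π s = π' s)
    (w : Fin n → ℝ) : bellmanOp P r γ π w s = bellmanOp P r γ π' w s := by
  simp only [bellmanOp_apply, h]

theorem polMatrix_mem_rowStochastic (hP0 : ∀ s a s', 0 ≤ P s a s')
    (hP1 : ∀ s a, ∑ s', P s a s' = 1) (π : Fin n → Fin k) :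
    polMatrix P π ∈ rowStochastic ℝ (Fin n) :=
  mem_rowStochastic_iff_sum.2 ⟨fun s s' => hP0 s (π s) s', fun s => hP1 s (π s)⟩

theorem polValue_eq_bellmanOp (hP0 : ∀ s a s', 0 ≤ P s a s')
    (hP1 : ∀ s a, ∑ s', P s a s' = 1) (hγ0 : 0 ≤ γ) (hγ1 : γ < 1) (π : Fin n → Fin k) :
    polValue P r γ π = bellmanOp P r γ π (polValue P r γ π) :=
  tsum_smul_pow_mulVec_eq (polMatrix_mem_rowStochastic hP0 hP1 π) hγ0 hγ1 _

theorem smul_mulVec_sub_polValue (hP0 : ∀ s a s', 0 ≤ P s a s')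
    (hP1 : ∀ s a, ∑ s', P s a s' = 1) (hγ0 : 0 ≤ γ) (hγ1 : γ < 1) (π : Fin n → Fin k)
    (w : Fin n → ℝ) :
    γ • polMatrix P π *ᵥ (w - polValue P r γ π) =
      bellmanOp P r γ π w - polValue P r γ π := by
  conv_rhs => rw [polValue_eq_bellmanOp hP0 hP1 hγ0 hγ1 π]
  rw [bellmanOp, bellmanOp, add_sub_add_left_eq_sub, mulVec_sub, smul_sub]

theorem polValue_le_of_bellmanOp_le (hP0 : ∀ s a s', 0 ≤ P s a s')
    (hP1 : ∀ s a, ∑ s', P s a s' = 1) (hγ0 : 0 ≤ γ) (hγ1 : γ < 1) (π : Fin n → Fin k)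
    {w : Fin n → ℝ} (h : bellmanOp P r γ π w ≤ w) : polValue P r γ π ≤ w := by
  refine sub_nonneg.1 (nonneg_of_smul_mulVec_le (polMatrix_mem_rowStochastic hP0 hP1 π) hγ0 hγ1 ?_)
  rw [smul_mulVec_sub_polValue hP0 hP1 hγ0 hγ1]
  exact sub_le_sub_right h _

theorem bellmanOp_le_polValue_of_le_bellmanOp (hP0 : ∀ s a s', 0 ≤ P s a s')
    (hP1 : ∀ s a, ∑ s', P s a s' = 1) (hγ0 : 0 ≤ γ) (hγ1 : γ < 1) (π : Fin n → Fin k)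
    {w : Fin n → ℝ} (h : w ≤ bellmanOp P r γ π w) : bellmanOp P r γ π w ≤ polValue P r γ π := by
  have hM := polMatrix_mem_rowStochastic hP0 hP1 π
  have hdiff : γ • polMatrix P π *ᵥ (polValue P r γ π - w) =
      polValue P r γ π - bellmanOp P r γ π w := by
    rw [← neg_sub w, mulVec_neg, smul_neg, smul_mulVec_sub_polValue hP0 hP1 hγ0 hγ1, neg_sub]
  have he : 0 ≤ polValue P r γ π - w :=
    nonneg_of_smul_mulVec_le hM hγ0 hγ1 (hdiff ▸ sub_le_sub_left h _)
  refine sub_nonneg.1 (hdiff ▸ smul_nonneg hγ0 ?_)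
  exact nonneg_mulVec_of_mem_rowStochastic hM he

theorem bellmanOp_le_polValue_of_improvementSet_eq_empty (hP0 : ∀ s a s', 0 ≤ P s a s')
    (hP1 : ∀ s a, ∑ s', P s a s' = 1) (hγ0 : 0 ≤ γ) (hγ1 : γ < 1) {π : Fin n → Fin k}
    (hT : improvementSet P r γ π = ∅) (π' : Fin n → Fin k) :
    bellmanOp P r γ π' (polValue P r γ π) ≤ polValue P r γ π := by
  intro s
  by_contra! hs
  set v := polValue P r γ π
  set σ := Function.update π s (π' s)
  have hσs : bellmanOp P r γ σ v s = bellmanOp P r γ π' v s :=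
    bellmanOp_apply_congr (Function.update_self ..) v
  have hσv : v ≤ bellmanOp P r γ σ v := by
    intro t
    rcases eq_or_ne t s with rfl | ht
    · exact hσs ▸ hs.le
    · rw [bellmanOp_apply_congr (Function.update_of_ne ht ..) v]
      exact (congrFun (polValue_eq_bellmanOp hP0 hP1 hγ0 hγ1 π) t).le
  have hvσ := bellmanOp_le_polValue_of_le_bellmanOp hP0 hP1 hγ0 hγ1 σ hσv
  have hmem : (s, π' s) ∈ improvementSet P r γ π :=
    ⟨fun t => (hσv t).trans (hvσ t), s, (hσs ▸ hs).trans_le (hvσ s)⟩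
  rw [hT] at hmem
  exact hmem

end MDP

theorem empty_improvement_set_optimal_general (n k : ℕ)
    (P : Fin n → Fin k → Fin n → ℝ) (r : Fin n → Fin k → ℝ) (γ : ℝ)
    (hP0 : ∀ s a s', 0 ≤ P s a s') (hP1 : ∀ s a, ∑ s', P s a s' = 1)
    (hγ0 : 0 ≤ γ) (hγ1 : γ < 1)
    (π : Fin n → Fin k) (hT : improvementSet P r γ π = ∅) :
    ∀ π' : Fin n → Fin k, ∀ s, polValue P r γ π' s ≤ polValue P r γ π s := by
  intro π'
  exact polValue_le_of_bellmanOp_le hP0 hP1 hγ0 hγ1 π'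
    (bellmanOp_le_polValue_of_improvementSet_eq_empty hP0 hP1 hγ0 hγ1 hT π')

theorem empty_improvement_set_optimal (n k : ℕ) (hn : 1 ≤ n) (hk : 1 ≤ k)
    (P : Fin n → Fin k → Fin n → ℝ) (r : Fin n → Fin k → ℝ) (γ : ℝ)
    (hP0 : ∀ s a s', 0 ≤ P s a s') (hP1 : ∀ s a, ∑ s', P s a s' = 1)
    (hγ0 : 0 ≤ γ) (hγ1 : γ < 1)
    (π : Fin n → Fin k) (hT : improvementSet P r γ π = ∅) :
    ∀ π' : Fin n → Fin k, ∀ s, polValue P r γ π' s ≤ polValue P r γ π s :=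
  empty_improvement_set_optimal_general n k P r γ hP0 hP1 hγ0 hγ1 π hT
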